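/- Let α = ∀x φ(x) be a ∀-clause of rank 1, i.e., φ(x) = e(x) ⊃ c(x) with e built from acceptable equalities in the single variable x and c a disjunction of atoms in x. Let C be the set of names mentioned in GND(α, 1) (the names mentioned in α plus one arbitrary new name). Then for every name a ∈ ℕ there exists b ∈ C such that φ(a) is valid if and only if φ(b) is valid (where a ground formula is valid iff it is true in every model). -/

import Mathlib

/-!
A permutation σ of names that fixes every name mentioned in α commutes with the evaluation of
the equality condition and sends the instance φ(a) to φ(σ a) atom by atom, so precomposing a
model with σ turns a countermodel of φ(σ a) into one of φ(a). Hence φ(a) and φ(b) are equally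
valid for any two names a, b outside α (take σ the transposition of a and b); a name a
mentioned in α is its own witness.
-/

namespace ImplicitFOL

attribute [local instance] Classical.propDecidable

/-- Ground atoms: a predicate symbol applied to a tuple of names (natural numbers). -/
def GAtom {Pred : Type} (ar : Pred → ℕ) : Type :=
  Σ P : Pred, Fin (ar P) → ℕ

/-- A model assigns a Boolean value to every ground atom. -/
abbrev Model {Pred : Type} (ar : Pred → ℕ) : Type := GAtom ar → Bool

/-- A partial model maps every ground atom to {0,1,*}; `none` plays the role of `*`. -/
abbrev PartialModel {Pred : Type} (ar : Pred → ℕ) : Type := GAtom ar → Option Bool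

/-- A literal: an atom or its negation (`true` = positive). -/
abbrev Lit {Pred : Type} (ar : Pred → ℕ) : Type := Bool × GAtom ar

/-- A ground clause: a finite disjunction of literals. -/
abbrev Clause {Pred : Type} (ar : Pred → ℕ) : Type := Finset (Lit ar)

/-- Terms occurring in non-ground atoms: variables or names. -/
inductive Term : Type
  | var : ℕ → Term
  | name : ℕ → Term
  deriving DecidableEq

/-- Formulas built from acceptable equalities `x = a` using ¬, ∨, ∧. -/
inductive EqForm : Type
  | eq : ℕ → ℕ → EqForm
  | not : EqForm → EqForm
  | or : EqForm → EqForm → EqForm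
  | and : EqForm → EqForm → EqForm
  deriving DecidableEq

/-- Non-ground atoms: a predicate applied to a tuple of terms. -/
def NGAtom {Pred : Type} (ar : Pred → ℕ) : Type :=
  Σ P : Pred, Fin (ar P) → Term

/-- A ∀-clause ∀(e ⊃ c): `e` built from acceptable equalities, `c` a disjunction of atoms. -/
structure VClause {Pred : Type} (ar : Pred → ℕ) : Type where
  e : EqForm
  c : List (NGAtom ar)

/-- Ground formulas over atoms of type `A` (with truth constants). -/
inductive Form (A : Type) : Type
  | tru : Form A
  | fls : Form A
  | atom : A → Form A
  | not : Form A → Form A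
  | or : Form A → Form A → Form A
  | and : Form A → Form A → Form A
  | imp : Form A → Form A → Form A

namespace Form

variable {A : Type}

/-- Evaluation of a ground formula in a model. -/
def eval (M : A → Bool) : Form A → Bool
  | tru => true
  | fls => false
  | atom a => M a
  | not φ => !(eval M φ)
  | or φ ψ => eval M φ || eval M ψ
  | and φ ψ => eval M φ && eval M ψ
  | imp φ ψ => !(eval M φ) || eval M ψ

/-- Witnessed evaluation in a partial model: `some true`/`some false` mean
witnessed true/false, `none` means neither. -/
def wit (N : A → Option Bool) : Form A → Option Bool
  | tru => some true
  | fls => some false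
  | atom a => N a
  | not φ => (wit N φ).map fun b => !b
  | or φ ψ =>
    match wit N φ, wit N ψ with
    | some true, _ => some true
    | _, some true => some true
    | some false, some false => some false
    | _, _ => none
  | and φ ψ =>
    match wit N φ, wit N ψ with
    | some false, _ => some false
    | _, some false => some false
    | some true, some true => some true
    | _, _ => none
  | imp φ ψ =>
    match wit N φ, wit N ψ with
    | some false, _ => some true
    | _, some true => some true
    | some true, some false => some false
    | _, _ => none

/-- Restriction of a ground formula under a partial model. -/
def restrict (N : A → Option Bool) : Form A → Form A
  | tru => tru
  | fls => fls
  | atom a =>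
    match N a with
    | some true => tru
    | some false => fls
    | none => atom a
  | not φ => not (restrict N φ)
  | or φ ψ => or (restrict N φ) (restrict N ψ)
  | and φ ψ => and (restrict N φ) (restrict N ψ)
  | imp φ ψ => imp (restrict N φ) (restrict N ψ)

end Form

variable {Pred : Type} {ar : Pred → ℕ}

/-- A partial model `N` is consistent with a model `M`. -/
def Consistent (N : PartialModel ar) (M : Model ar) : Prop :=
  ∀ (p : GAtom ar) (b : Bool), N p = some b → M p = b

/-- A literal is true in a model. -/
def litTrue (M : Model ar) (l : Lit ar) : Prop := M l.2 = l.1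

/-- A model satisfies a clause iff some literal of it is true. -/
def clauseTrue (M : Model ar) (c : Clause ar) : Prop := ∃ l ∈ c, litTrue M l

/-- Negation of a literal. -/
def negLit (l : Lit ar) : Lit ar := (!l.1, l.2)

/-- Names mentioned in a ground atom. -/
def GAtom.names (a : GAtom ar) : Finset ℕ := Finset.image a.2 Finset.univ

/-- Names mentioned in a ground formula. -/
def Form.namesOf : Form (GAtom ar) → Finset ℕ
  | .tru => ∅
  | .fls => ∅
  | .atom a => GAtom.names a
  | .not φ => Form.namesOf φ
  | .or φ ψ => Form.namesOf φ ∪ Form.namesOf ψ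
  | .and φ ψ => Form.namesOf φ ∪ Form.namesOf ψ
  | .imp φ ψ => Form.namesOf φ ∪ Form.namesOf ψ

/-- Names mentioned in a ground clause. -/
def Clause.namesOf (c : Clause ar) : Finset ℕ := c.sup fun l => GAtom.names l.2

def Term.subst (θ : ℕ → ℕ) : Term → ℕ
  | .var v => θ v
  | .name n => n

def Term.namesOf : Term → Finset ℕ
  | .var _ => ∅
  | .name n => {n}

def Term.varsOf : Term → Finset ℕ
  | .var v => {v}
  | .name _ => ∅

/-- Evaluation of an equality formula under a substitution of names for variables. -/
def EqForm.eval (θ : ℕ → ℕ) : EqForm → Bool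
  | .eq v n => θ v == n
  | .not e => !(EqForm.eval θ e)
  | .or e₁ e₂ => EqForm.eval θ e₁ || EqForm.eval θ e₂
  | .and e₁ e₂ => EqForm.eval θ e₁ && EqForm.eval θ e₂

def EqForm.namesOf : EqForm → Finset ℕ
  | .eq _ n => {n}
  | .not e => EqForm.namesOf e
  | .or e₁ e₂ => EqForm.namesOf e₁ ∪ EqForm.namesOf e₂
  | .and e₁ e₂ => EqForm.namesOf e₁ ∪ EqForm.namesOf e₂

def EqForm.varsOf : EqForm → Finset ℕ
  | .eq v _ => {v}
  | .not e => EqForm.varsOf e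
  | .or e₁ e₂ => EqForm.varsOf e₁ ∪ EqForm.varsOf e₂
  | .and e₁ e₂ => EqForm.varsOf e₁ ∪ EqForm.varsOf e₂

def NGAtom.subst (θ : ℕ → ℕ) (a : NGAtom ar) : GAtom ar :=
  ⟨a.1, fun i => Term.subst θ (a.2 i)⟩

def NGAtom.namesOf (a : NGAtom ar) : Finset ℕ :=
  Finset.univ.biUnion fun i => Term.namesOf (a.2 i)

def NGAtom.varsOf (a : NGAtom ar) : Finset ℕ :=
  Finset.univ.biUnion fun i => Term.varsOf (a.2 i)

/-- Variables mentioned in a ∀-clause. -/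
def VClause.varsOf (vc : VClause ar) : Finset ℕ :=
  EqForm.varsOf vc.e ∪ vc.c.foldr (fun a s => NGAtom.varsOf a ∪ s) ∅

/-- Names mentioned in a ∀-clause. -/
def VClause.namesOf (vc : VClause ar) : Finset ℕ :=
  EqForm.namesOf vc.e ∪ vc.c.foldr (fun a s => NGAtom.namesOf a ∪ s) ∅

/-- The ground clause cθ obtained by applying the substitution θ to the clause part. -/
noncomputable def VClause.ground (vc : VClause ar) (θ : ℕ → ℕ) : Clause ar :=
  (vc.c.map fun a => ((true : Bool), NGAtom.subst θ a)).toFinset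

/-- Substitutional satisfaction of a ∀-clause: every instance whose equality
condition holds is a true clause. -/
def VClause.sat (M : Model ar) (vc : VClause ar) : Prop :=
  ∀ θ : ℕ → ℕ, EqForm.eval θ vc.e = true → clauseTrue M (VClause.ground vc θ)

/-- Names mentioned in a KB. -/
def kbNames (Δ : Finset (VClause ar)) : Finset ℕ := Δ.sup VClause.namesOf

/-- Rank of a KB: maximum number of variables mentioned in any ∀-clause of it. -/
def rank (Δ : Finset (VClause ar)) : ℕ := Δ.sup fun vc => (VClause.varsOf vc).card

/-- GND(Δ): grounding over all names. -/
def gnd (Δ : Finset (VClause ar)) : Set (Clause ar) :=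
  { g | ∃ vc ∈ Δ, ∃ θ : ℕ → ℕ, EqForm.eval θ vc.e = true ∧ g = VClause.ground vc θ }

/-- GND(Δ, C): grounding over the names mentioned in Δ together with those in C. -/
def gndOver (Δ : Finset (VClause ar)) (C : Finset ℕ) : Set (Clause ar) :=
  { g | ∃ vc ∈ Δ, ∃ θ : ℕ → ℕ, (∀ v, θ v ∈ kbNames Δ ∪ C) ∧
          EqForm.eval θ vc.e = true ∧ g = VClause.ground vc θ }

/-- A literal is made true by a partial model. -/
def litTrueN (N : PartialModel ar) (l : Lit ar) : Prop := N l.2 = some l.1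

/-- A literal is made false by a partial model. -/
def litFalseN (N : PartialModel ar) (l : Lit ar) : Prop := N l.2 = some (!l.1)

/-- A ∀-clause is witnessed true in `N` for the set of names `C`: every grounding
over `C` whose equality condition holds yields a clause with a literal true under `N`. -/
def VClause.witnessed (N : PartialModel ar) (C : Finset ℕ) (vc : VClause ar) : Prop :=
  ∀ θ : ℕ → ℕ, (∀ v, θ v ∈ C) → EqForm.eval θ vc.e = true →
    ∃ l ∈ VClause.ground vc θ, litTrueN N l

/-- U(s): the least superset of `s` closed under unit propagation. -/
inductive UP (s : Set (Clause ar)) : Clause ar → Prop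
  | base {c : Clause ar} : c ∈ s → UP s c
  | unit {l : Lit ar} {c : Clause ar} :
      UP s {l} → UP s (insert (negLit l) c) → UP s c

/-- V(s): all weakenings of clauses of U(s). -/
def Vset (s : Set (Clause ar)) : Set (Clause ar) := { c | ∃ c', UP s c' ∧ c' ⊆ c }

/-- Limited entailment `s ⊨_z φ`. -/
def entailsAt : ℕ → Set (Clause ar) → Clause ar → Prop
  | 0, s, φ => φ ∈ Vset s
  | z + 1, s, φ => ∃ c ∈ s, ∀ l ∈ c, entailsAt z (insert ({l} : Clause ar) s) φ

/-- Restriction of a ground clause under a partial model: `none` is the constant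
true (some literal is made true by `N`); otherwise false literals are deleted. -/
noncomputable def restrictClause (N : PartialModel ar) (c : Clause ar) : Option (Clause ar) :=
  if ∃ l ∈ c, litTrueN N l then none else some (c.filter fun l => ¬ litFalseN N l)

/-- Restriction of a set of ground clauses (constant-true clauses are dropped). -/
def restrictSet (N : PartialModel ar) (F : Set (Clause ar)) : Set (Clause ar) :=
  { c' | ∃ c ∈ F, restrictClause N c = some c' }

/-- Satisfaction of a possibly-trivially-true restricted clause. -/
def optClauseTrue (M : Model ar) : Option (Clause ar) → Prop
  | none => True
  | some c => clauseTrue M c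

/-- Limited entailment where the constant true is deemed entailed at every level. -/
def entailsAtOpt (z : ℕ) (s : Set (Clause ar)) : Option (Clause ar) → Prop
  | none => True
  | some φ => entailsAt z s φ

def GAtom.rename (σ : ℕ → ℕ) (p : GAtom ar) : GAtom ar := ⟨p.1, σ ∘ p.2⟩

def VClause.ValidUnder (vc : VClause ar) (θ : ℕ → ℕ) : Prop :=
  ∀ M : Model ar, EqForm.eval θ vc.e = true → clauseTrue M (VClause.ground vc θ)

theorem EqForm.eval_perm_comp (σ : Equiv.Perm ℕ) (θ : ℕ → ℕ) (e : EqForm)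
    (hσ : ∀ n ∈ EqForm.namesOf e, σ n = n) :
    EqForm.eval (σ ∘ θ) e = EqForm.eval θ e := by
  induction e with
  | eq v n =>
    have hn : σ n = n := hσ n (Finset.mem_singleton_self n)
    conv_lhs => rw [EqForm.eval, Function.comp_apply, ← hn]
    simp only [EqForm.eval, beq_eq_decide, σ.injective.eq_iff]
  | not e ih => simp only [EqForm.eval, ih hσ]
  | or e₁ e₂ ih₁ ih₂ | and e₁ e₂ ih₁ ih₂ =>
    simp only [EqForm.namesOf, Finset.mem_union] at hσ
    simp only [EqForm.eval, ih₁ fun n hn => hσ n (.inl hn), ih₂ fun n hn => hσ n (.inr hn)]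

theorem NGAtom.subst_comp (σ : ℕ → ℕ) (θ : ℕ → ℕ) (g : NGAtom ar)
    (hσ : ∀ n ∈ NGAtom.namesOf g, σ n = n) :
    NGAtom.subst (σ ∘ θ) g = (NGAtom.subst θ g).rename σ := by
  refine Sigma.ext rfl (heq_of_eq (funext fun i => ?_))
  change Term.subst (σ ∘ θ) (g.2 i) = σ (Term.subst θ (g.2 i))
  cases ht : g.2 i with
  | var v => rfl
  | name n =>
    refine (hσ n (Finset.mem_biUnion.mpr ⟨i, Finset.mem_univ i, ?_⟩)).symm
    simp only [ht, Term.namesOf, Finset.mem_singleton]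

theorem _root_.List.subset_foldr_union {α β : Type} [DecidableEq β] (f : α → Finset β)
    {l : List α} {x : α} (hx : x ∈ l) : f x ⊆ l.foldr (fun a s => f a ∪ s) ∅ := by
  induction l with
  | nil => cases hx
  | cons y l ih =>
    rcases List.mem_cons.mp hx with rfl | hx
    · exact Finset.subset_union_left
    · exact (ih hx).trans Finset.subset_union_right

theorem VClause.namesOf_subset_of_mem {vc : VClause ar} {g : NGAtom ar} (hg : g ∈ vc.c) :
    NGAtom.namesOf g ⊆ VClause.namesOf vc :=
  (List.subset_foldr_union _ hg).trans Finset.subset_union_right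

theorem VClause.clauseTrue_ground_iff (M : Model ar) (vc : VClause ar) (θ : ℕ → ℕ) :
    clauseTrue M (VClause.ground vc θ) ↔ ∃ g ∈ vc.c, M (NGAtom.subst θ g) = true := by
  simp [clauseTrue, VClause.ground, litTrue]

theorem VClause.ValidUnder.perm_comp {vc : VClause ar} {θ : ℕ → ℕ} (h : vc.ValidUnder θ)
    (σ : Equiv.Perm ℕ) (hσ : ∀ n ∈ VClause.namesOf vc, σ n = n) :
    vc.ValidUnder (σ ∘ θ) := by
  intro M he
  rw [EqForm.eval_perm_comp σ θ vc.e fun n hn => hσ n (Finset.mem_union_left _ hn)] at he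
  obtain ⟨g, hg, hM⟩ :=
    (VClause.clauseTrue_ground_iff _ vc θ).mp (h (M ∘ GAtom.rename σ) he)
  refine (VClause.clauseTrue_ground_iff M vc _).mpr ⟨g, hg, ?_⟩
  rwa [NGAtom.subst_comp σ θ g fun n hn => hσ n (VClause.namesOf_subset_of_mem hg hn)]

theorem VClause.validUnder_const_iff_of_not_mem {vc : VClause ar} {a b : ℕ}
    (ha : a ∉ VClause.namesOf vc) (hb : b ∉ VClause.namesOf vc) :
    vc.ValidUnder (fun _ => a) ↔ vc.ValidUnder (fun _ => b) := by
  have hσ : ∀ n ∈ VClause.namesOf vc, Equiv.swap a b n = n := fun n hn =>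
    Equiv.swap_apply_of_ne_of_ne (ne_of_mem_of_not_mem hn ha) (ne_of_mem_of_not_mem hn hb)
  have hab : (Equiv.swap a b ∘ fun _ : ℕ => a) = fun _ => b :=
    funext fun _ => Equiv.swap_apply_left a b
  have hba : (Equiv.swap a b ∘ fun _ : ℕ => b) = fun _ => a :=
    funext fun _ => Equiv.swap_apply_right a b
  exact ⟨fun h => hab ▸ h.perm_comp _ hσ, fun h => hba ▸ h.perm_comp _ hσ⟩

variable [Countable Pred]

theorem statement2_general
    (vc : VClause ar)
    (b₀ : ℕ) (hb₀ : b₀ ∉ VClause.namesOf vc) (a : ℕ) :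
    ∃ b ∈ VClause.namesOf vc ∪ {b₀},
      ((∀ M : Model ar, EqForm.eval (fun _ => a) vc.e = true →
          clauseTrue M (VClause.ground vc fun _ => a)) ↔
        (∀ M : Model ar, EqForm.eval (fun _ => b) vc.e = true →
          clauseTrue M (VClause.ground vc fun _ => b))) := by
  by_cases ha : a ∈ VClause.namesOf vc
  · exact ⟨a, Finset.mem_union_left _ ha, Iff.rfl⟩
  · exact ⟨b₀, Finset.mem_union_right _ (Finset.mem_singleton_self b₀),
      VClause.validUnder_const_iff_of_not_mem ha hb₀⟩

/-- for a ∀-clause α = ∀x φ(x) of rank 1, letting C be the names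
of α plus one arbitrary new name b₀, every name a ∈ ℕ has some b ∈ C with
"φ(a) is valid iff φ(b) is valid". -/
theorem statement2
    (vc : VClause ar) (hrank : (VClause.varsOf vc).card = 1)
    (b₀ : ℕ) (hb₀ : b₀ ∉ VClause.namesOf vc) (a : ℕ) :
    ∃ b ∈ VClause.namesOf vc ∪ {b₀},
      ((∀ M : Model ar, EqForm.eval (fun _ => a) vc.e = true →
          clauseTrue M (VClause.ground vc fun _ => a)) ↔
        (∀ M : Model ar, EqForm.eval (fun _ => b) vc.e = true →
          clauseTrue M (VClause.ground vc fun _ => b))) :=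
  statement2_general vc b₀ hb₀ a

end ImplicitFOL
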